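/- arXiv:2406.08458 — 5 statements merged into one kernel-verified Lean document; each statement's English description precedes it below -/
import Mathlib

section
/- Let 𝒮 = Σ_{i=1}^L φ_i ⊗ ψ_i be an operator on V ⊗ V where all φ_i, ψ_j pairwise commute and are locally finite on V. Then 𝒮 is locally finite on V ⊗ V, and its Jordan–Chevalley decomposition is given by 𝒮^(s) = Σ_i φ_i^(s) ⊗ ψ_i^(s) and 𝒮^(n) = Σ_i (φ_i^(s) ⊗ ψ_i^(n) + φ_i^(n) ⊗ ψ_i^(s) + φ_i^(n) ⊗ ψ_i^(n)). -/
/-- A linear operator on a complex vector space is *locally finite* if every vector lies in a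
finite-dimensional invariant subspace. -/
def LocFinEnd {M : Type*} [AddCommGroup M] [Module ℂ M] (f : Module.End ℂ M) : Prop :=
  ∀ v : M, ∃ W : Submodule ℂ M, FiniteDimensional ℂ W ∧ v ∈ W ∧ ∀ w ∈ W, f w ∈ W

/-- A linear operator is *locally nilpotent* if every vector is killed by some power. -/
def LocNilpEnd {M : Type*} [AddCommGroup M] [Module ℂ M] (f : Module.End ℂ M) : Prop :=
  ∀ v : M, ∃ k : ℕ, (f ^ k) v = 0

/-- A linear operator is *semisimple (diagonalizable)*: the space is spanned by eigenvectors. -/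
def DiagEnd {M : Type*} [AddCommGroup M] [Module ℂ M] (f : Module.End ℂ M) : Prop :=
  Submodule.span ℂ {v : M | ∃ c : ℂ, f v = c • v} = ⊤

/-- `IsJCDecomp f fs fn` : `f = fs + fn` is the Jordan–Chevalley decomposition of `f`,
with `fs` semisimple, `fn` locally nilpotent and `[fs, fn] = 0`. -/
def IsJCDecomp {M : Type*} [AddCommGroup M] [Module ℂ M] (f fs fn : Module.End ℂ M) : Prop :=
  f = fs + fn ∧ Commute fs fn ∧ DiagEnd fs ∧ LocNilpEnd fn


open scoped TensorProduct

/-!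
The semisimple part `fs` of a Jordan–Chevalley decomposition `f = fs + fn` acts as `μ` on the
generalized `μ`-eigenspace of `f`: the `μ`-eigenspace of `fs` lies in it, the eigenspaces of `fs`
span, and the generalized eigenspaces of `f` are independent. Hence `fs` and `fn` commute with
everything commuting with `f`, and decompositions of commuting operators add up, because sums of
commuting diagonalizable (resp. locally nilpotent) operators are again diagonalizable (resp.
locally nilpotent). Expanding `(φs + φn) ⊗ (ψs + ψn)` decomposes each `φᵢ ⊗ ψᵢ`, and these commute
since the `φᵢ` and the `ψᵢ` do. Local finiteness follows from the decomposition, as the generalized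
eigenvectors span.
-/

section

open Module.End TensorProduct

variable {M N : Type*} [AddCommGroup M] [Module ℂ M] [AddCommGroup N] [Module ℂ N]

theorem locNilpEnd_iff_maxGenEigenspace_eq_top {f : Module.End ℂ M} :
    LocNilpEnd f ↔ f.maxGenEigenspace 0 = ⊤ := by
  simp [LocNilpEnd, Submodule.eq_top_iff']

theorem diagEnd_iff_iSup_eigenspace_eq_top {f : Module.End ℂ M} :
    DiagEnd f ↔ ⨆ μ, f.eigenspace μ = ⊤ := by
  rw [DiagEnd, Submodule.iSup_eq_span]
  congr! 3
  ext v
  simp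

theorem Commute.tensorMap {a c : Module.End ℂ M} {b d : Module.End ℂ N} (hac : Commute a c)
    (hbd : Commute b d) : Commute (map a b) (map c d) := by
  simp only [Commute, SemiconjBy, ← TensorProduct.map_mul, hac.eq, hbd.eq]

namespace LocNilpEnd

theorem zero : LocNilpEnd (0 : Module.End ℂ M) := fun _ => ⟨1, by simp⟩

theorem add {f g : Module.End ℂ M} (hfg : Commute f g) (hf : LocNilpEnd f) (hg : LocNilpEnd g) :
    LocNilpEnd (f + g) := by
  rw [locNilpEnd_iff_maxGenEigenspace_eq_top] at *
  simpa [hf, hg] using genEigenspace_inf_le_add f g 0 0 ⊤ ⊤ hfg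

theorem tensorMap_of_forall_tmul {f : Module.End ℂ M} {g : Module.End ℂ N}
    (h : ∀ x y, ∃ k : ℕ, (f ^ k) x ⊗ₜ[ℂ] (g ^ k) y = 0) : LocNilpEnd (map f g) := by
  rw [locNilpEnd_iff_maxGenEigenspace_eq_top, eq_top_iff, ← span_tmul_eq_top, Submodule.span_le]
  rintro _ ⟨x, y, rfl⟩
  obtain ⟨k, hk⟩ := h x y
  exact (mem_maxGenEigenspace _ _ _).mpr ⟨k, by simpa using hk⟩

theorem tensorMap_left {f : Module.End ℂ M} (hf : LocNilpEnd f) (g : Module.End ℂ N) :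
    LocNilpEnd (map f g) :=
  tensorMap_of_forall_tmul fun x _ => (hf x).imp fun _ hk => by simp [hk]

theorem tensorMap_right (f : Module.End ℂ M) {g : Module.End ℂ N} (hg : LocNilpEnd g) :
    LocNilpEnd (map f g) :=
  tensorMap_of_forall_tmul fun _ y => (hg y).imp fun _ hk => by simp [hk]

end LocNilpEnd

namespace DiagEnd

theorem zero : DiagEnd (0 : Module.End ℂ M) :=
  Submodule.eq_top_iff'.mpr fun _ => Submodule.subset_span ⟨0, by simp⟩

theorem le_iSup_inf_eigenspace {f : Module.End ℂ M} (hf : DiagEnd f) {p : Submodule ℂ M}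
    (hp : ∀ x ∈ p, f x ∈ p) : p ≤ ⨆ μ, p ⊓ f.eigenspace μ := by
  classical
  intro x hx
  have hx' : x ∈ ⨆ μ, f.eigenspace μ := by
    rw [diagEnd_iff_iSup_eigenspace_eq_top.mp hf]; trivial
  obtain ⟨m, hm, rfl⟩ := (Submodule.mem_iSup_iff_exists_finsupp _ _).mp hx'
  refine (Submodule.mem_iSup_iff_exists_finsupp _ _).mpr ⟨m, fun μ => ⟨?_, hm μ⟩, rfl⟩
  by_cases hμ : μ ∈ m.support
  swap
  · simp [Finsupp.notMem_support_iff.mp hμ]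
  -- the Lagrange polynomial of `μ` on the eigenvalues involved projects onto the `μ`-component
  have hproj : Polynomial.aeval f (Lagrange.basis m.support id μ) (m.sum fun _ v => v) = m μ := by
    have heval : ∀ ν ∈ m.support, Polynomial.aeval f (Lagrange.basis m.support id μ) (m ν) =
        (Lagrange.basis m.support id μ).eval ν • m ν := fun ν hν =>
      aeval_apply_of_hasEigenvector ⟨hm ν, Finsupp.mem_support_iff.mp hν⟩
    rw [map_finsuppSum, Finsupp.sum, Finset.sum_eq_single_of_mem μ hμ]
    · rw [heval μ hμ, show (Lagrange.basis m.support id μ).eval μ = 1 from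
        Lagrange.eval_basis_self (Set.injOn_id _) hμ, one_smul]
    · intro ν hν hνμ
      rw [heval ν hν, show (Lagrange.basis m.support id μ).eval ν = 0 from
        Lagrange.eval_basis_of_ne (v := id) hνμ.symm hν, zero_smul]
  rw [← hproj]
  exact Polynomial.aeval_apply_smul_mem_of_le_comap hx _ _ hp

theorem add {f g : Module.End ℂ M} (hfg : Commute f g) (hf : DiagEnd f) (hg : DiagEnd g) :
    DiagEnd (f + g) := by
  rw [diagEnd_iff_iSup_eigenspace_eq_top] at hf ⊢
  rw [eq_top_iff, ← hf]
  refine iSup_le fun μ => (hg.le_iSup_inf_eigenspace fun x hx =>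
    mapsTo_genEigenspace_of_comm hfg μ 1 hx).trans (iSup_le fun ν => ?_)
  refine le_iSup_of_le (μ + ν) fun x ⟨hxf, hxg⟩ => ?_
  rw [SetLike.mem_coe, mem_eigenspace_iff] at hxf hxg
  rw [mem_eigenspace_iff, LinearMap.add_apply, hxf, hxg, add_smul]

theorem tensorMap {f : Module.End ℂ M} {g : Module.End ℂ N} (hf : DiagEnd f) (hg : DiagEnd g) :
    DiagEnd (map f g) := by
  rw [DiagEnd, eq_top_iff, ← map₂_mk_top_top_eq_top, ← hf, ← hg, Submodule.map₂_span_span]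
  refine Submodule.span_mono ?_
  rintro _ ⟨x, ⟨μ, hx⟩, y, ⟨ν, hy⟩, rfl⟩
  exact ⟨μ * ν, by simp [hx, hy, ← smul_tmul', smul_smul, mul_comm]⟩

end DiagEnd

theorem exists_finiteDimensional_invariant_of_mem_maxGenEigenspace {f : Module.End ℂ M} {μ : ℂ}
    {v : M} (hv : v ∈ f.maxGenEigenspace μ) :
    ∃ W : Submodule ℂ M, FiniteDimensional ℂ W ∧ v ∈ W ∧ ∀ w ∈ W, f w ∈ W := by
  obtain ⟨k, hk⟩ := (mem_maxGenEigenspace _ _ _).mp hv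
  set g := f - μ • 1
  set W := Submodule.span ℂ ((fun j => (g ^ j) v) '' Set.Iic k)
  have hgW : ∀ w ∈ W, g w ∈ W := by
    refine fun w hw => (Submodule.span_le.mpr ?_ : W ≤ W.comap g) hw
    rintro _ ⟨j, hj, rfl⟩
    rcases (Set.mem_Iic.mp hj).lt_or_eq with hj | rfl
    · exact Submodule.subset_span ⟨j + 1, Nat.succ_le_of_lt hj, by simp [pow_succ']⟩
    · simp [hk]
  refine ⟨W, FiniteDimensional.span_of_finite ℂ ((Set.finite_Iic k).image _),
    Submodule.subset_span ⟨0, Set.mem_Iic.mpr k.zero_le, by simp⟩, fun w hw => ?_⟩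
  have hfw : f w = g w + μ • w := by simp [g]
  rw [hfw]
  exact W.add_mem (hgW w hw) (W.smul_mem μ hw)

theorem locFinEnd_of_iSup_maxGenEigenspace_eq_top {f : Module.End ℂ M}
    (h : ⨆ μ, f.maxGenEigenspace μ = ⊤) : LocFinEnd f := by
  intro v
  have hv : v ∈ ⨆ μ, f.maxGenEigenspace μ := by rw [h]; trivial
  refine Submodule.iSup_induction (motive := fun v =>
    ∃ W : Submodule ℂ M, FiniteDimensional ℂ W ∧ v ∈ W ∧ ∀ w ∈ W, f w ∈ W) _ hv
    (fun μ v hv => exists_finiteDimensional_invariant_of_mem_maxGenEigenspace hv)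
    ⟨⊥, inferInstance, zero_mem _, fun w hw => by simp_all⟩ fun v w hv hw => ?_
  obtain ⟨V, hVfin, hvV, hV⟩ := hv
  obtain ⟨W, hWfin, hwW, hW⟩ := hw
  refine ⟨V ⊔ W, inferInstance, Submodule.add_mem_sup hvV hwW, fun x hx => ?_⟩
  obtain ⟨y, hy, z, hz, rfl⟩ := Submodule.mem_sup.mp hx
  rw [map_add]
  exact Submodule.add_mem_sup (hV y hy) (hW z hz)

namespace IsJCDecomp

section

variable {f fs fn g gs gn : Module.End ℂ M}

theorem eigenspace_le_maxGenEigenspace (h : IsJCDecomp f fs fn) (μ : ℂ) :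
    fs.eigenspace μ ≤ f.maxGenEigenspace μ := by
  obtain ⟨rfl, hc, -, hn⟩ := h
  have := genEigenspace_inf_le_add fs fn μ 0 1 ⊤ hc
  change fs.eigenspace μ ⊓ fn.maxGenEigenspace 0 ≤ (fs + fn).genEigenspace (μ + 0) (1 + ⊤) at this
  rwa [locNilpEnd_iff_maxGenEigenspace_eq_top.mp hn, inf_top_eq, add_zero, add_top] at this

theorem iSup_maxGenEigenspace_eq_top (h : IsJCDecomp f fs fn) :
    ⨆ μ, f.maxGenEigenspace μ = ⊤ :=
  top_le_iff.mp <| (diagEnd_iff_iSup_eigenspace_eq_top.mp h.2.2.1).ge.trans <|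
    iSup_mono h.eigenspace_le_maxGenEigenspace

theorem maxGenEigenspace_le_eigenspace (h : IsJCDecomp f fs fn) (μ : ℂ) :
    f.maxGenEigenspace μ ≤ fs.eigenspace μ := by
  intro m hm
  have hm' : m ∈ fs.eigenspace μ ⊔ ⨆ (ν) (_ : ν ≠ μ), fs.eigenspace ν := by
    rw [← iSup_split_single, diagEnd_iff_iSup_eigenspace_eq_top.mp h.2.2.1]; trivial
  obtain ⟨e, he, y, hy, rfl⟩ := Submodule.mem_sup.mp hm'
  -- `y` is a generalized `μ`-eigenvector of `f` lying in the other generalized eigenspaces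
  have hy0 : y = 0 := by
    refine (Submodule.disjoint_def.mp (f.independent_maxGenEigenspace μ)) y ?_ ?_
    · simpa using sub_mem hm (h.eigenspace_le_maxGenEigenspace μ he)
    · exact iSup₂_mono (fun ν _ => h.eigenspace_le_maxGenEigenspace ν) hy
  rwa [hy0, add_zero]

theorem commute_of_commute (h : IsJCDecomp f fs fn) (hfg : Commute f g) :
    Commute fs g ∧ Commute fn g := by
  have hs : Commute fs g := by
    refine LinearMap.eqLocus_eq_top.mp (top_le_iff.mp ?_)
    rw [← h.iSup_maxGenEigenspace_eq_top]
    refine iSup_le fun μ m hm => ?_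
    have hgm := mapsTo_maxGenEigenspace_of_comm hfg μ hm
    show fs (g m) = g (fs m)
    rw [mem_eigenspace_iff.mp (h.maxGenEigenspace_le_eigenspace μ hgm),
      mem_eigenspace_iff.mp (h.maxGenEigenspace_le_eigenspace μ hm), map_smul]
  refine ⟨hs, ?_⟩
  rw [show fn = f - fs by rw [h.1]; abel]
  exact hfg.sub_left hs

theorem locFinEnd (h : IsJCDecomp f fs fn) : LocFinEnd f :=
  locFinEnd_of_iSup_maxGenEigenspace_eq_top h.iSup_maxGenEigenspace_eq_top

theorem zero : IsJCDecomp (0 : Module.End ℂ M) 0 0 :=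
  ⟨(add_zero 0).symm, Commute.zero_left 0, DiagEnd.zero, LocNilpEnd.zero⟩

theorem add (hf : IsJCDecomp f fs fn) (hg : IsJCDecomp g gs gn) (hfg : Commute f g) :
    IsJCDecomp (f + g) (fs + gs) (fn + gn) := by
  obtain ⟨hsg, hng⟩ := hf.commute_of_commute hfg
  obtain ⟨hgsfs, hgnfs⟩ := hg.commute_of_commute hsg.symm
  obtain ⟨hgsfn, hgnfn⟩ := hg.commute_of_commute hng.symm
  refine ⟨by rw [hf.1, hg.1]; abel, ?_, hf.2.2.1.add hgsfs.symm hg.2.2.1,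
    hf.2.2.2.add hgnfn.symm hg.2.2.2⟩
  exact (hf.2.1.add_right hgnfs.symm).add_left (hgsfn.add_right hg.2.1)

end

theorem sum {ι : Type*} (s : Finset ι) {f fs fn : ι → Module.End ℂ M}
    (hc : ∀ i ∈ s, ∀ j ∈ s, Commute (f i) (f j)) (h : ∀ i ∈ s, IsJCDecomp (f i) (fs i) (fn i)) :
    IsJCDecomp (∑ i ∈ s, f i) (∑ i ∈ s, fs i) (∑ i ∈ s, fn i) := by
  classical
  induction s using Finset.induction_on with
  | empty => simpa using zero
  | insert a s ha ih =>
    simp only [Finset.mem_insert, forall_eq_or_imp] at hc h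
    rw [Finset.sum_insert ha, Finset.sum_insert ha, Finset.sum_insert ha]
    exact h.1.add (ih (fun i hi j hj => (hc.2 i hi).2 j hj) h.2)
      (Commute.sum_right _ _ _ fun j hj => hc.1.2 j hj)

theorem tensorMap {f fs fn : Module.End ℂ M} {g gs gn : Module.End ℂ N}
    (hf : IsJCDecomp f fs fn) (hg : IsJCDecomp g gs gn) :
    IsJCDecomp (map f g) (map fs gs) (map fs gn + map fn gs + map fn gn) := by
  obtain ⟨rfl, hfc, hfs, hfn⟩ := hf
  obtain ⟨rfl, hgc, hgs, hgn⟩ := hg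
  have h1 : Commute (map fs gn) (map fn gs) := hfc.tensorMap hgc.symm
  have h2 : Commute (map fs gn) (map fn gn) := hfc.tensorMap (.refl gn)
  have h3 : Commute (map fn gs) (map fn gn) := (Commute.refl fn).tensorMap hgc
  refine ⟨?_, ?_, hfs.tensorMap hgs, ?_⟩
  · simp only [map_add_left, map_add_right]
    abel
  · exact (((Commute.refl fs).tensorMap hgc).add_right (hfc.tensorMap (.refl gs))).add_right
      (hfc.tensorMap hgc)
  · exact ((hgn.tensorMap_right fs).add h1 (hfn.tensorMap_left gs)).add (h2.add_left h3)
      (hfn.tensorMap_left gn)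

end IsJCDecomp

end

theorem braiding_jordan_chevalley_general {V : Type*} [AddCommGroup V] [Module ℂ V] (L : ℕ)
    (φ ψ φs φn ψs ψn : Fin L → Module.End ℂ V)
    (hcomm : ∀ i j, Commute (φ i) (φ j) ∧ Commute (φ i) (ψ j) ∧ Commute (ψ i) (ψ j))
    (hJCφ : ∀ i, IsJCDecomp (φ i) (φs i) (φn i))
    (hJCψ : ∀ i, IsJCDecomp (ψ i) (ψs i) (ψn i)) :
    LocFinEnd (∑ i, TensorProduct.map (φ i) (ψ i) : Module.End ℂ (V ⊗[ℂ] V)) ∧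
    IsJCDecomp (∑ i, TensorProduct.map (φ i) (ψ i))
      (∑ i, TensorProduct.map (φs i) (ψs i))
      (∑ i, (TensorProduct.map (φs i) (ψn i) + TensorProduct.map (φn i) (ψs i) +
        TensorProduct.map (φn i) (ψn i))) := by
  have hJC := IsJCDecomp.sum Finset.univ
    (fun i _ j _ => (hcomm i j).1.tensorMap (hcomm i j).2.2)
    (fun i _ => (hJCφ i).tensorMap (hJCψ i))
  exact ⟨hJC.locFinEnd, hJC⟩

/-- Let `𝒮 = Σᵢ φᵢ ⊗ ψᵢ` on `V ⊗ V`, where the `φᵢ, ψⱼ` pairwise commute and are locally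
finite on `V`.  Then `𝒮` is locally finite on `V ⊗ V` and its Jordan–Chevalley decomposition is
`𝒮⁽ˢ⁾ = Σᵢ φᵢ⁽ˢ⁾ ⊗ ψᵢ⁽ˢ⁾` and
`𝒮⁽ⁿ⁾ = Σᵢ (φᵢ⁽ˢ⁾ ⊗ ψᵢ⁽ⁿ⁾ + φᵢ⁽ⁿ⁾ ⊗ ψᵢ⁽ˢ⁾ + φᵢ⁽ⁿ⁾ ⊗ ψᵢ⁽ⁿ⁾)`. -/
theorem braiding_jordan_chevalley {V : Type*} [AddCommGroup V] [Module ℂ V] (L : ℕ)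
    (φ ψ φs φn ψs ψn : Fin L → Module.End ℂ V)
    (hlf : ∀ i, LocFinEnd (φ i) ∧ LocFinEnd (ψ i))
    (hcomm : ∀ i j, Commute (φ i) (φ j) ∧ Commute (φ i) (ψ j) ∧ Commute (ψ i) (ψ j))
    (hJCφ : ∀ i, IsJCDecomp (φ i) (φs i) (φn i))
    (hJCψ : ∀ i, IsJCDecomp (ψ i) (ψs i) (ψn i)) :
    LocFinEnd (∑ i, TensorProduct.map (φ i) (ψ i) : Module.End ℂ (V ⊗[ℂ] V)) ∧
    IsJCDecomp (∑ i, TensorProduct.map (φ i) (ψ i))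
      (∑ i, TensorProduct.map (φs i) (ψs i))
      (∑ i, (TensorProduct.map (φs i) (ψn i) + TensorProduct.map (φn i) (ψs i) +
        TensorProduct.map (φn i) (ψn i))) :=
  braiding_jordan_chevalley_general L φ ψ φs φn ψs ψn hcomm hJCφ hJCψ
end

section
/- Let 𝒮 be a braiding map with locally finite components. For any a, b ∈ V there exist a finite decomposition a ⊗ b = Σ_{i=1}^r a_i ⊗ b_i, scalars d_i ∈ ℂ, and m ∈ ℤ_{≥0} such that each a_i is a common eigenvector of all φ_j^(s), each b_i is a common eigenvector of all ψ_j^(s), 𝒮^(s)(a_i ⊗ b_i) = d_i (a_i ⊗ b_i), and (𝒮^(n))^m (a_i ⊗ b_i) = 0 for all i. -/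
open scoped TensorProduct

namespace BraidAux

variable {V : Type*} [AddCommGroup V] [Module ℂ V]

lemma iSup_eigenspace_eq_top {s : Module.End ℂ V} (h : DiagEnd s) :
    ⨆ μ : ℂ, s.eigenspace μ = ⊤ := by
  rw [eq_top_iff, ← h]
  refine Submodule.span_le.2 ?_
  rintro v ⟨c, hc⟩
  exact Submodule.mem_iSup_of_mem c (Module.End.mem_eigenspace_iff.2 hc)

lemma exists_eig_finsupp {s : Module.End ℂ V} (h : DiagEnd s) (v : V) :
    ∃ l : ℂ →₀ V, (∀ μ, l μ ∈ s.eigenspace μ) ∧ ∑ μ ∈ l.support, l μ = v := by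
  have hv : v ∈ ⨆ μ : ℂ, s.eigenspace μ := by rw [iSup_eigenspace_eq_top h]; trivial
  obtain ⟨l, h1, h2⟩ := (Submodule.mem_iSup_iff_exists_finsupp _ v).1 hv
  exact ⟨l, h1, h2⟩

lemma eig_sum_eq_zero {s : Module.End ℂ V} {T : Finset ℂ} {u : ℂ → V}
    (hu : ∀ μ ∈ T, u μ ∈ s.eigenspace μ) (h0 : ∑ μ ∈ T, u μ = 0) :
    ∀ μ ∈ T, u μ = 0 := by
  classical
  by_contra hcon
  push_neg at hcon
  obtain ⟨μ₀, hμ₀T, hμ₀⟩ := hcon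
  set S : Finset ℂ := T.filter (fun μ => u μ ≠ 0) with hS
  have hsum : ∑ μ ∈ S, u μ = 0 := by
    rw [hS, Finset.sum_filter_of_ne (fun x _ hx => hx)]
    exact h0
  have hli : LinearIndependent ℂ (fun μ : {μ // μ ∈ S} => u μ) := by
    apply s.eigenvectors_linearIndependent' (fun μ : {μ // μ ∈ S} => (μ : ℂ))
      Subtype.coe_injective
    rintro ⟨μ, hμ⟩
    have hμ' := Finset.mem_filter.1 hμ
    exact ⟨hu μ hμ'.1, hμ'.2⟩
  have := linearIndependent_iff'.1 hli Finset.univ (fun _ => (1 : ℂ)) ?_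
    ⟨μ₀, Finset.mem_filter.2 ⟨hμ₀T, hμ₀⟩⟩ (Finset.mem_univ _)
  · exact one_ne_zero this
  · rw [← hsum]
    simp only [one_smul]
    exact (Finset.sum_attach S (fun μ => u μ))

lemma eig_mem_comm {s g : Module.End ℂ V} (h : Commute g s) {μ : ℂ} {v : V}
    (hv : v ∈ s.eigenspace μ) : g v ∈ s.eigenspace μ := by
  rw [Module.End.mem_eigenspace_iff] at hv ⊢
  calc s (g v) = (s * g) v := rfl
  _ = (g * s) v := by rw [h.eq]
  _ = g (s v) := rfl
  _ = μ • g v := by rw [hv, map_smul]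

lemma pow_eig {s : Module.End ℂ V} {μ : ℂ} {v : V} (hv : s v = μ • v) (b : ℕ) :
    (s ^ b) v = μ ^ b • v := by
  induction b with
  | zero => simp
  | succ b ih =>
    rw [pow_succ', Module.End.mul_apply, ih, map_smul, hv, smul_smul, ← pow_succ]

lemma pow_zero_mono {n : Module.End ℂ V} {v : V} {k : ℕ} (h : (n ^ k) v = 0) {a : ℕ}
    (hka : k ≤ a) : (n ^ a) v = 0 := by
  obtain ⟨c, rfl⟩ := Nat.exists_eq_add_of_le hka
  rw [add_comm, pow_add, Module.End.mul_apply, h, map_zero]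

lemma eig_of_nilp_smul {n : Module.End ℂ V} (hn : LocNilpEnd n) {c : ℂ} (hcne : c ≠ 0)
    {y : V} (h : n y = c • y) : y = 0 := by
  obtain ⟨j, hj⟩ := hn y
  have hp : (n ^ j) y = c ^ j • y := pow_eig h j
  rw [hj] at hp
  have := hp.symm
  rw [smul_eq_zero] at this
  rcases this with h1 | h2
  · exact absurd h1 (pow_ne_zero _ hcne)
  · exact h2

lemma shifted_pow_mem {s n : Module.End ℂ V} (hc : Commute s n) {μ lam : ℂ} {v : V}
    (hv : v ∈ s.eigenspace μ) (k : ℕ) :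
    ((s + n - lam • 1) ^ k) v ∈ s.eigenspace μ := by
  induction k with
  | zero => simpa using hv
  | succ k ih =>
    rw [pow_succ', Module.End.mul_apply]
    set w := ((s + n - lam • 1) ^ k) v
    have hw : s w = μ • w := Module.End.mem_eigenspace_iff.1 ih
    have hnw : n w ∈ s.eigenspace μ := eig_mem_comm hc.symm ih
    have : (s + n - lam • 1) w = μ • w + n w - lam • w := by
      simp [LinearMap.sub_apply, LinearMap.add_apply, hw]
    rw [this]
    exact Submodule.sub_mem _ (Submodule.add_mem _ (Submodule.smul_mem _ _ ih) hnw)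
      (Submodule.smul_mem _ _ ih)

lemma jc_shifted_pow_eq {s n : Module.End ℂ V} (hc : Commute s n) {μ : ℂ} {v : V}
    (hv : v ∈ s.eigenspace μ) (k : ℕ) :
    ((s + n - μ • 1) ^ k) v = (n ^ k) v ∧ (n ^ k) v ∈ s.eigenspace μ := by
  induction k with
  | zero => simpa using hv
  | succ k ih =>
    obtain ⟨h1, h2⟩ := ih
    have hmem : (n ^ (k+1)) v ∈ s.eigenspace μ := by
      rw [pow_succ', Module.End.mul_apply]
      exact eig_mem_comm hc.symm h2
    refine ⟨?_, hmem⟩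
    rw [pow_succ', Module.End.mul_apply, h1]
    have hw : s ((n ^ k) v) = μ • ((n ^ k) v) := Module.End.mem_eigenspace_iff.1 h2
    rw [pow_succ', Module.End.mul_apply]
    simp [LinearMap.sub_apply, LinearMap.add_apply, hw]

lemma eig_ne_ker_pow {s n : Module.End ℂ V} (hc : Commute s n) (hn : LocNilpEnd n)
    {lam μ : ℂ} (hne : μ ≠ lam) {v : V} (hv : v ∈ s.eigenspace μ) {k : ℕ}
    (h0 : ((s + n - lam • 1) ^ k) v = 0) : v = 0 := by
  induction k generalizing v with
  | zero => simpa using h0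
  | succ k ih =>
    set y := ((s + n - lam • 1) ^ k) v with hy
    have hymem : y ∈ s.eigenspace μ := shifted_pow_mem hc hv k
    have hsy : s y = μ • y := Module.End.mem_eigenspace_iff.1 hymem
    have hfy : (s + n - lam • 1) y = 0 := by
      rw [hy, ← Module.End.mul_apply, ← pow_succ']
      exact h0
    have : n y = (lam - μ) • y := by
      have h' : μ • y + n y - lam • y = 0 := by
        have h'' := hfy
        simp only [LinearMap.sub_apply, LinearMap.add_apply, LinearMap.smul_apply,
          Module.End.one_apply, hsy] at h''
        exact h''
      have h4 := sub_eq_zero.1 h'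
      rw [sub_smul, ← h4]
      abel
    have hy0 : y = 0 := eig_of_nilp_smul hn (sub_ne_zero.2 (Ne.symm hne)) this
    exact ih hv hy0

end BraidAux

namespace BraidAux
variable {V : Type*} [AddCommGroup V] [Module ℂ V]

lemma commute_sn_of_commute {f s n g : Module.End ℂ V} (h : IsJCDecomp f s n)
    (hg : Commute g f) : Commute g s ∧ Commute g n := by
  obtain ⟨hf, hsn, hd, hn⟩ := h
  subst hf
  have key : ∀ (lam : ℂ) (v : V), v ∈ s.eigenspace lam → g v ∈ s.eigenspace lam := by
    intro lam v hv
    obtain ⟨k, hk⟩ : ∃ k : ℕ, (((s + n - lam • 1 : Module.End ℂ V)) ^ k) v = 0 := by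
      obtain ⟨k, hk⟩ := hn v
      exact ⟨k, by rw [(jc_shifted_pow_eq hsn hv k).1, hk]⟩
    have hgf : Commute g ((s + n - lam • 1) ^ k) :=
      (hg.sub_right ((Commute.one_right g).smul_right lam)).pow_right k
    have h0 : ((s + n - lam • 1) ^ k) (g v) = 0 := by
      calc ((s + n - lam • 1) ^ k) (g v) = g (((s + n - lam • 1) ^ k) v) := by
            rw [← Module.End.mul_apply, ← hgf.eq, Module.End.mul_apply]
      _ = 0 := by rw [hk, map_zero]
    obtain ⟨l, hl, hsum⟩ := exists_eig_finsupp hd (g v)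
    have hz : ∀ μ ∈ l.support, ((s + n - lam • 1) ^ k) (l μ) = 0 := by
      apply eig_sum_eq_zero (s := s) (fun μ _ => shifted_pow_mem hsn (hl μ) k)
      rw [← map_sum, hsum, h0]
    have hzero : ∀ μ ∈ l.support, μ ≠ lam → l μ = 0 := fun μ hμ hne =>
      eig_ne_ker_pow hsn hn hne (hl μ) (hz μ hμ)
    have : g v = ∑ μ ∈ l.support, if μ = lam then l lam else 0 := by
      rw [← hsum]
      refine Finset.sum_congr rfl fun μ hμ => ?_
      by_cases hμlam : μ = lam
      · simp [hμlam]
      · simp [hμlam, hzero μ hμ hμlam]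
    rw [this, Finset.sum_ite_eq' l.support lam (fun _ => l lam)]
    by_cases hmem : lam ∈ l.support
    · simpa [hmem] using hl lam
    · simpa [hmem] using Submodule.zero_mem _
  have hcs : Commute g s := by
    have hker : (⊤ : Submodule ℂ V) ≤ LinearMap.ker (s * g - g * s) := by
      rw [← hd]
      apply Submodule.span_le.2
      rintro v ⟨c, hc⟩
      have hv : v ∈ s.eigenspace c := Module.End.mem_eigenspace_iff.2 hc
      have hgv := Module.End.mem_eigenspace_iff.1 (key c v hv)
      simp only [SetLike.mem_coe, LinearMap.mem_ker, LinearMap.sub_apply, Module.End.mul_apply,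
        hgv, hc, map_smul, sub_self]
    have : s * g - g * s = 0 := LinearMap.ker_eq_top.1 (top_le_iff.1 hker)
    have := sub_eq_zero.1 this
    exact this.symm
  refine ⟨hcs, ?_⟩
  have : Commute g (s + n - s) := (hg.sub_right hcs)
  simpa using this

lemma single_closure {s n : Module.End ℂ V} (hd : DiagEnd s) (hn : LocNilpEnd n)
    (u : V) : ∃ F : Submodule ℂ V, FiniteDimensional ℂ F ∧
      ∀ a b : ℕ, (n ^ a) ((s ^ b) u) ∈ F := by
  classical
  obtain ⟨l, hl, hsum⟩ := exists_eig_finsupp hd u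
  choose k hk using fun μ : ℂ => hn (l μ)
  set K := l.support.sup k with hK
  refine ⟨Submodule.span ℂ (((l.support ×ˢ Finset.range (K+1)).image
    (fun p => (n ^ p.2) (l p.1)) : Finset V) : Set V), inferInstance, ?_⟩
  intro a b
  rw [← hsum, map_sum, map_sum]
  apply Submodule.sum_mem
  intro μ hμ
  have heig : s (l μ) = μ • l μ := Module.End.mem_eigenspace_iff.1 (hl μ)
  rw [pow_eig heig b, map_smul]
  apply Submodule.smul_mem
  by_cases hKa : a ≤ K
  · apply Submodule.subset_span
    refine Finset.mem_coe.2 (Finset.mem_image.2 ⟨(μ, a), ?_, rfl⟩)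
    exact Finset.mem_product.2 ⟨hμ, Finset.mem_range.2 (Nat.lt_succ_of_le hKa)⟩
  · rw [pow_zero_mono (hk μ) (le_trans (Finset.le_sup hμ) (le_of_not_ge hKa))]
    exact Submodule.zero_mem _

lemma closure_step {s n : Module.End ℂ V} (hd : DiagEnd s) (hn : LocNilpEnd n)
    (hc : Commute s n) (U : Submodule ℂ V) (hU : FiniteDimensional ℂ U) :
    ∃ W : Submodule ℂ V, U ≤ W ∧ FiniteDimensional ℂ W ∧
      (∀ w ∈ W, s w ∈ W) ∧ (∀ w ∈ W, n w ∈ W) ∧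
      ∀ g : Module.End ℂ V, Commute g s → Commute g n → (∀ u ∈ U, g u ∈ U) →
        ∀ w ∈ W, g w ∈ W := by
  classical
  set SGen : Set V := {w | ∃ a b : ℕ, ∃ u ∈ U, w = (n ^ a) ((s ^ b) u)} with hSGen
  set W := Submodule.span ℂ SGen with hW
  have hUW : U ≤ W := by
    intro u hu
    exact Submodule.subset_span ⟨0, 0, u, hu, by simp⟩
  have inv_of_gen : ∀ g : Module.End ℂ V, (∀ w ∈ SGen, g w ∈ W) → ∀ w ∈ W, g w ∈ W := by
    intro g hgen w hw
    induction hw using Submodule.span_induction with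
    | mem x hx => exact hgen x hx
    | zero => simpa using Submodule.zero_mem W
    | add x y _ _ hx hy => rw [map_add]; exact Submodule.add_mem _ hx hy
    | smul c x _ hx => rw [map_smul]; exact Submodule.smul_mem _ _ hx
  have hsinv : ∀ w ∈ W, s w ∈ W := by
    apply inv_of_gen
    rintro w ⟨a, b, u, hu, rfl⟩
    have : s ((n ^ a) ((s ^ b) u)) = (n ^ a) ((s ^ (b+1)) u) := by
      calc s ((n ^ a) ((s ^ b) u)) = (s * n ^ a) ((s ^ b) u) := rfl
        _ = (n ^ a * s) ((s ^ b) u) := by rw [(hc.pow_right a).eq]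
        _ = (n ^ a) ((s ^ (b+1)) u) := by
              rw [Module.End.mul_apply, ← Module.End.mul_apply s (s ^ b), ← pow_succ']
    rw [this]
    exact Submodule.subset_span ⟨a, b+1, u, hu, rfl⟩
  have hninv : ∀ w ∈ W, n w ∈ W := by
    apply inv_of_gen
    rintro w ⟨a, b, u, hu, rfl⟩
    have : n ((n ^ a) ((s ^ b) u)) = (n ^ (a+1)) ((s ^ b) u) := by
      rw [← Module.End.mul_apply, ← pow_succ']
    rw [this]
    exact Submodule.subset_span ⟨a+1, b, u, hu, rfl⟩
  have hginv : ∀ g : Module.End ℂ V, Commute g s → Commute g n → (∀ u ∈ U, g u ∈ U) →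
      ∀ w ∈ W, g w ∈ W := by
    intro g hgs hgn hgU
    apply inv_of_gen
    rintro w ⟨a, b, u, hu, rfl⟩
    have hcg : Commute g (n ^ a * s ^ b) := (hgn.pow_right a).mul_right (hgs.pow_right b)
    have : g ((n ^ a) ((s ^ b) u)) = (n ^ a) ((s ^ b) (g u)) := by
      calc g ((n ^ a) ((s ^ b) u)) = (g * (n ^ a * s ^ b)) u := rfl
        _ = ((n ^ a * s ^ b) * g) u := by rw [hcg.eq]
        _ = (n ^ a) ((s ^ b) (g u)) := rfl
    rw [this]
    exact Submodule.subset_span ⟨a, b, g u, hgU u hu, rfl⟩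
  -- finite dimensionality
  obtain ⟨t, ht⟩ : U.FG := (Submodule.fg_iff_finiteDimensional U).2 hU
  choose Fu hFu1 hFu2 using fun u : V => single_closure hd hn u
  set F : Submodule ℂ V := t.sup Fu with hF
  have hFfd : FiniteDimensional ℂ F := by
    haveI := hFu1
    exact Submodule.finiteDimensional_finset_sup t Fu
  have hgenF : SGen ⊆ (F : Set V) := by
    rintro w ⟨a, b, u, hu, rfl⟩
    show (n ^ a) ((s ^ b) u) ∈ F
    have hu' : u ∈ Submodule.span ℂ (t : Set V) := by rw [ht]; exact hu
    clear hu
    induction hu' using Submodule.span_induction with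
    | mem x hx => exact Finset.le_sup (f := Fu) hx (hFu2 x a b)
    | zero => simpa using Submodule.zero_mem F
    | add x y _ _ hx hy => rw [map_add, map_add]; exact Submodule.add_mem _ hx hy
    | smul c x _ hx => rw [map_smul, map_smul]; exact Submodule.smul_mem _ _ hx
  have hWF : W ≤ F := Submodule.span_le.2 hgenF
  exact ⟨W, hUW, Submodule.finiteDimensional_of_le hWF, hsinv, hninv, hginv⟩

end BraidAux

namespace BraidAux
variable {V : Type*} [AddCommGroup V] [Module ℂ V]

lemma exists_joint_invariant {L : ℕ} (S N : Fin L → Module.End ℂ V)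
    (hd : ∀ j, DiagEnd (S j)) (hn : ∀ j, LocNilpEnd (N j))
    (hco : ∀ i j, Commute (S i) (S j) ∧ Commute (S i) (N j) ∧ Commute (N i) (N j))
    (v : V) :
    ∃ W : Submodule ℂ V, FiniteDimensional ℂ W ∧ v ∈ W ∧
      ∀ j, (∀ w ∈ W, S j w ∈ W) ∧ (∀ w ∈ W, N j w ∈ W) := by
  suffices h : ∀ k : ℕ, k ≤ L → ∃ W : Submodule ℂ V, FiniteDimensional ℂ W ∧ v ∈ W ∧
      ∀ j : Fin L, (j : ℕ) < k → ((∀ w ∈ W, S j w ∈ W) ∧ (∀ w ∈ W, N j w ∈ W)) by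
    obtain ⟨W, h1, h2, h3⟩ := h L le_rfl
    exact ⟨W, h1, h2, fun j => h3 j j.isLt⟩
  intro k
  induction k with
  | zero =>
    exact fun _ => ⟨Submodule.span ℂ {v},
      FiniteDimensional.span_of_finite ℂ (Set.finite_singleton v),
      Submodule.mem_span_singleton_self v, fun j hj => absurd hj (Nat.not_lt_zero _)⟩
  | succ k ih =>
    intro hk
    obtain ⟨W, hW1, hW2, hW3⟩ := ih (Nat.le_of_succ_le hk)
    set jk : Fin L := ⟨k, hk⟩ with hjk
    obtain ⟨hle, hfd, hs, hnn, hg⟩ :=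
      (closure_step (hd jk) (hn jk) ((hco jk jk).2.1) W hW1).choose_spec
    set W' := (closure_step (hd jk) (hn jk) ((hco jk jk).2.1) W hW1).choose with hW'
    refine ⟨W', hfd, hle hW2, ?_⟩
    intro j hj
    rcases Nat.lt_succ_iff_lt_or_eq.1 hj with h | h
    · exact ⟨hg (S j) (hco j jk).1 (hco j jk).2.1 (fun u hu => (hW3 j h).1 u hu),
        hg (N j) ((hco jk j).2.1.symm) (hco j jk).2.2 (fun u hu => (hW3 j h).2 u hu)⟩
    · have : j = jk := Fin.ext h
      rw [this]
      exact ⟨hs, hnn⟩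

lemma simul_diag_span {L : ℕ} (S : Fin L → Module.End ℂ V)
    (hd : ∀ j, DiagEnd (S j)) (hco : ∀ i j, Commute (S i) (S j)) :
    Submodule.span ℂ {x : V | ∀ j, ∃ c : ℂ, S j x = c • x} = ⊤ := by
  suffices h : ∀ k : ℕ, k ≤ L →
      Submodule.span ℂ {x : V | ∀ j : Fin L, (j : ℕ) < k → ∃ c : ℂ, S j x = c • x} = ⊤ by
    have hL := h L le_rfl
    have hset : {x : V | ∀ j : Fin L, (j : ℕ) < L → ∃ c : ℂ, S j x = c • x}
        = {x : V | ∀ j, ∃ c : ℂ, S j x = c • x} := by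
      ext x
      exact ⟨fun hx j => hx j j.isLt, fun hx j _ => hx j⟩
    rw [hset] at hL
    exact hL
  intro k
  induction k with
  | zero =>
    intro _
    have : {x : V | ∀ j : Fin L, (j : ℕ) < 0 → ∃ c : ℂ, S j x = c • x} = Set.univ := by
      ext x; simp
    rw [this, Submodule.span_univ]
  | succ k ih =>
    intro hk
    have hspan := ih (Nat.le_of_succ_le hk)
    set jk : Fin L := ⟨k, hk⟩ with hjk
    rw [eq_top_iff, ← hspan]
    apply Submodule.span_le.2
    intro x hx
    show x ∈ Submodule.span ℂ {x : V | ∀ j : Fin L, (j : ℕ) < k + 1 → ∃ c : ℂ, S j x = c • x}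
    obtain ⟨l, hl, hsum⟩ := exists_eig_finsupp (hd jk) x
    rw [← hsum]
    apply Submodule.sum_mem
    intro μ hμ
    apply Submodule.subset_span
    intro j hj
    rcases Nat.lt_succ_iff_lt_or_eq.1 hj with h | h
    · obtain ⟨c, hc⟩ := hx j h
      refine ⟨c, ?_⟩
      have hz := eig_sum_eq_zero (s := S jk) (T := l.support)
        (u := fun ν => S j (l ν) - c • l ν)
        (fun ν _ => Submodule.sub_mem _ (eig_mem_comm (hco j jk) (hl ν))
          (Submodule.smul_mem _ _ (hl ν))) ?_ μ hμ
      · exact sub_eq_zero.1 hz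
      · rw [Finset.sum_sub_distrib, ← map_sum, ← Finset.smul_sum, hsum, hc, sub_self]
    · have : j = jk := Fin.ext h
      rw [this]
      exact ⟨μ, Module.End.mem_eigenspace_iff.1 (hl μ)⟩

lemma uniform_nilp {n : Module.End ℂ V} (hn : LocNilpEnd n) (W : Submodule ℂ V)
    (hW : FiniteDimensional ℂ W) : ∃ k : ℕ, ∀ w ∈ W, (n ^ k) w = 0 := by
  classical
  obtain ⟨t, ht⟩ : W.FG := (Submodule.fg_iff_finiteDimensional W).2 hW
  choose k hk using fun u : V => hn u
  refine ⟨t.sup k, ?_⟩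
  intro w hw
  have hw' : w ∈ Submodule.span ℂ (t : Set V) := by rw [ht]; exact hw
  have : Submodule.span ℂ (t : Set V) ≤ LinearMap.ker (n ^ t.sup k) := by
    apply Submodule.span_le.2
    intro u hu
    exact LinearMap.mem_ker.2 (pow_zero_mono (hk u) (Finset.le_sup hu))
  exact LinearMap.mem_ker.1 (this hw')

end BraidAux

namespace BraidAux
open TensorProduct in
lemma exists_pow_tensor_zero {V : Type*} [AddCommGroup V] [Module ℂ V] {L : ℕ}
    (Sφ Nφ Sψ Nψ : Fin L → Module.End ℂ V)
    (hφd : ∀ j, DiagEnd (Sφ j)) (hφn : ∀ j, LocNilpEnd (Nφ j))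
    (hφc : ∀ i j, Commute (Sφ i) (Sφ j) ∧ Commute (Sφ i) (Nφ j) ∧ Commute (Nφ i) (Nφ j))
    (hψd : ∀ j, DiagEnd (Sψ j)) (hψn : ∀ j, LocNilpEnd (Nψ j))
    (hψc : ∀ i j, Commute (Sψ i) (Sψ j) ∧ Commute (Sψ i) (Nψ j) ∧ Commute (Nψ i) (Nψ j))
    (x y : V) :
    ∃ m : ℕ, ((∑ j, (TensorProduct.map (Sφ j) (Nψ j) + TensorProduct.map (Nφ j) (Sψ j) +
      TensorProduct.map (Nφ j) (Nψ j))) ^ m) (x ⊗ₜ[ℂ] y) = 0 := by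
  classical
  obtain ⟨W, hWfd, hxW, hWinv⟩ := exists_joint_invariant Sφ Nφ hφd hφn hφc x
  obtain ⟨W', hW'fd, hyW, hW'inv⟩ := exists_joint_invariant Sψ Nψ hψd hψn hψc y
  set P : Fin L × Fin 3 → Module.End ℂ V :=
    fun t => if t.2 = 0 then Sφ t.1 else Nφ t.1 with hPdef
  set Q : Fin L × Fin 3 → Module.End ℂ V :=
    fun t => if t.2 = 1 then Sψ t.1 else Nψ t.1 with hQdef
  have hPcases : ∀ t : Fin L × Fin 3, P t = Sφ t.1 ∨ P t = Nφ t.1 := by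
    intro t
    by_cases h : t.2 = 0
    · left; exact if_pos h
    · right; exact if_neg h
  have hQcases : ∀ t : Fin L × Fin 3, Q t = Sψ t.1 ∨ Q t = Nψ t.1 := by
    intro t
    by_cases h : t.2 = 1
    · left; exact if_pos h
    · right; exact if_neg h
  have hbranch : ∀ t : Fin L × Fin 3, P t = Nφ t.1 ∨ Q t = Nψ t.1 := by
    intro t
    by_cases h : t.2 = 1
    · left; exact if_neg (by rw [h]; decide)
    · right; exact if_neg h
  have hPinv : ∀ t, ∀ w ∈ W, P t w ∈ W := by
    intro t w hw
    rcases hPcases t with h | h <;> rw [h]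
    · exact (hWinv t.1).1 w hw
    · exact (hWinv t.1).2 w hw
  have hQinv : ∀ t, ∀ w ∈ W', Q t w ∈ W' := by
    intro t w hw
    rcases hQcases t with h | h <;> rw [h]
    · exact (hW'inv t.1).1 w hw
    · exact (hW'inv t.1).2 w hw
  have hPc : ∀ t t', Commute (P t) (P t') := by
    intro t t'
    rcases hPcases t with h | h <;> rcases hPcases t' with h' | h' <;> rw [h, h']
    · exact (hφc t.1 t'.1).1
    · exact (hφc t.1 t'.1).2.1
    · exact ((hφc t'.1 t.1).2.1).symm
    · exact (hφc t.1 t'.1).2.2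
  have hQc : ∀ t t', Commute (Q t) (Q t') := by
    intro t t'
    rcases hQcases t with h | h <;> rcases hQcases t' with h' | h' <;> rw [h, h']
    · exact (hψc t.1 t'.1).1
    · exact (hψc t.1 t'.1).2.1
    · exact ((hψc t'.1 t.1).2.1).symm
    · exact (hψc t.1 t'.1).2.2
  set TGen : Set (V ⊗[ℂ] V) := {z | ∃ w ∈ W, ∃ w' ∈ W', z = w ⊗ₜ[ℂ] w'} with hTGen
  set T : Submodule ℂ (V ⊗[ℂ] V) := Submodule.span ℂ TGen with hT
  have hxyT : x ⊗ₜ[ℂ] y ∈ T := Submodule.subset_span ⟨x, hxW, y, hyW, rfl⟩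
  have hTfd : FiniteDimensional ℂ T := by
    haveI := hWfd
    haveI := hW'fd
    have hle : T ≤ LinearMap.range (TensorProduct.map W.subtype W'.subtype) := by
      apply Submodule.span_le.2
      rintro z ⟨w, hw, w', hw', rfl⟩
      exact ⟨(⟨w, hw⟩ : W) ⊗ₜ[ℂ] (⟨w', hw'⟩ : W'), by
        rw [TensorProduct.map_tmul]; rfl⟩
    exact Submodule.finiteDimensional_of_le hle
  have hmapsTo : ∀ (P0 Q0 : Module.End ℂ V), (∀ w ∈ W, P0 w ∈ W) → (∀ w ∈ W', Q0 w ∈ W') →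
      ∀ z ∈ T, TensorProduct.map P0 Q0 z ∈ T := by
    intro P0 Q0 hP0 hQ0 z hz
    induction hz using Submodule.span_induction with
    | mem z hzgen =>
      obtain ⟨w, hw, w', hw', rfl⟩ := hzgen
      rw [TensorProduct.map_tmul]
      exact Submodule.subset_span ⟨P0 w, hP0 w hw, Q0 w', hQ0 w' hw', rfl⟩
    | zero => rw [map_zero]; exact Submodule.zero_mem _
    | add a b _ _ ha hb => rw [map_add]; exact Submodule.add_mem _ ha hb
    | smul c a _ ha => rw [map_smul]; exact Submodule.smul_mem _ _ ha
  have hAinv : ∀ t, ∀ z ∈ T, TensorProduct.map (P t) (Q t) z ∈ T :=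
    fun t => hmapsTo _ _ (hPinv t) (hQinv t)
  -- nilpotency of each restricted summand
  have hnilp_aux : ∀ (t : Fin L × Fin 3) (k : ℕ),
      ((∀ w ∈ W, ((P t) ^ k) w = 0) ∨ (∀ w ∈ W', ((Q t) ^ k) w = 0)) →
      IsNilpotent ((TensorProduct.map (P t) (Q t)).restrict (hAinv t)) := by
    intro t k hk
    refine ⟨k, ?_⟩
    rw [Module.End.pow_restrict]
    apply LinearMap.ext
    intro z
    apply Subtype.ext
    rw [LinearMap.restrict_apply]
    show ((TensorProduct.map (P t) (Q t)) ^ k) (z : V ⊗[ℂ] V) = ((0 : Module.End ℂ T) z : V ⊗[ℂ] V)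
    have hz := z.2
    rw [TensorProduct.map_pow]
    have : ∀ u ∈ T, (TensorProduct.map ((P t) ^ k) ((Q t) ^ k)) u = 0 := by
      intro u hu
      induction hu using Submodule.span_induction with
      | mem u hugen =>
        obtain ⟨w, hw, w', hw', rfl⟩ := hugen
        rw [TensorProduct.map_tmul]
        rcases hk with h | h
        · rw [h w hw, TensorProduct.zero_tmul]
        · rw [h w' hw', TensorProduct.tmul_zero]
      | zero => rw [map_zero]
      | add a b _ _ ha hb => rw [map_add, ha, hb, add_zero]
      | smul c a _ ha => rw [map_smul, ha, smul_zero]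
    rw [this (z : V ⊗[ℂ] V) hz]
    rfl
  have hAnilp : ∀ t, IsNilpotent ((TensorProduct.map (P t) (Q t)).restrict (hAinv t)) := by
    intro t
    rcases hbranch t with h | h
    · obtain ⟨k, hk⟩ := uniform_nilp (hφn t.1) W hWfd
      exact hnilp_aux t k (Or.inl (by rw [h]; exact hk))
    · obtain ⟨k, hk⟩ := uniform_nilp (hψn t.1) W' hW'fd
      exact hnilp_aux t k (Or.inr (by rw [h]; exact hk))
  have hAcomm : ∀ t t',
      Commute (TensorProduct.map (P t) (Q t)) (TensorProduct.map (P t') (Q t')) := by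
    intro t t'
    show _ * _ = _ * _
    rw [← TensorProduct.map_mul, ← TensorProduct.map_mul, (hPc t t').eq, (hQc t t').eq]
  set N : Module.End ℂ (V ⊗[ℂ] V) :=
    ∑ j, (TensorProduct.map (Sφ j) (Nψ j) + TensorProduct.map (Nφ j) (Sψ j) +
      TensorProduct.map (Nφ j) (Nψ j)) with hNdef
  have hNsum : N = ∑ t : Fin L × Fin 3, TensorProduct.map (P t) (Q t) := by
    rw [hNdef, Fintype.sum_prod_type]
    apply Finset.sum_congr rfl
    intro j _
    rw [Fin.sum_univ_three]
    have e1 : P (j, (0 : Fin 3)) = Sφ j := if_pos rfl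
    have e2 : Q (j, (0 : Fin 3)) = Nψ j :=
      if_neg (show ¬((0 : Fin 3) = 1) from by decide)
    have e3 : P (j, (1 : Fin 3)) = Nφ j :=
      if_neg (show ¬((1 : Fin 3) = 0) from by decide)
    have e4 : Q (j, (1 : Fin 3)) = Sψ j := if_pos rfl
    have e5 : P (j, (2 : Fin 3)) = Nφ j :=
      if_neg (show ¬((2 : Fin 3) = 0) from by decide)
    have e6 : Q (j, (2 : Fin 3)) = Nψ j :=
      if_neg (show ¬((2 : Fin 3) = 1) from by decide)
    rw [e1, e2, e3, e4, e5, e6]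
  have hNinv : ∀ z ∈ T, N z ∈ T := by
    intro z hz
    rw [hNsum, LinearMap.sum_apply]
    exact Submodule.sum_mem _ (fun t _ => hAinv t z hz)
  have hNrestrict : N.restrict hNinv
      = ∑ t : Fin L × Fin 3, (TensorProduct.map (P t) (Q t)).restrict (hAinv t) := by
    apply LinearMap.ext
    intro z
    apply Subtype.ext
    show N (z : V ⊗[ℂ] V) =
      (((∑ t : Fin L × Fin 3, (TensorProduct.map (P t) (Q t)).restrict (hAinv t)) z : T)
        : V ⊗[ℂ] V)
    have hR : (((∑ t : Fin L × Fin 3, (TensorProduct.map (P t) (Q t)).restrict (hAinv t)) z : T)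
        : V ⊗[ℂ] V) = ∑ t : Fin L × Fin 3, (TensorProduct.map (P t) (Q t)) (z : V ⊗[ℂ] V) := by
      rw [LinearMap.sum_apply, AddSubmonoidClass.coe_finset_sum]
      exact Finset.sum_congr rfl fun t _ => rfl
    rw [hR, hNsum, LinearMap.sum_apply]
  have hNnilp : IsNilpotent (N.restrict hNinv) := by
    rw [hNrestrict]
    exact Commute.isNilpotent_sum (fun t _ => hAnilp t)
      (fun t t' _ _ => LinearMap.restrict_commute (hAcomm t t') (hAinv t) (hAinv t'))
  obtain ⟨m, hm⟩ := hNnilp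
  refine ⟨m, ?_⟩
  have h2 : ((N.restrict hNinv) ^ m) ⟨x ⊗ₜ[ℂ] y, hxyT⟩ = 0 := by rw [hm]; rfl
  rw [Module.End.pow_restrict] at h2
  have h3 := congrArg (Subtype.val) h2
  simpa using h3

end BraidAux

/-- For a braiding map `𝒮 = Σᵢ φᵢ ⊗ ψᵢ` with locally finite components, any `a ⊗ b` admits a
finite decomposition `a ⊗ b = Σᵢ aᵢ ⊗ bᵢ` into simultaneous eigenvectors of the semisimple parts,
with `𝒮⁽ˢ⁾(aᵢ ⊗ bᵢ) = dᵢ (aᵢ ⊗ bᵢ)` and `(𝒮⁽ⁿ⁾)^m (aᵢ ⊗ bᵢ) = 0`. -/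
theorem braiding_eigen_decomposition {V : Type*} [AddCommGroup V] [Module ℂ V] (L : ℕ)
    (φ ψ φs φn ψs ψn : Fin L → Module.End ℂ V)
    (hlf : ∀ i, LocFinEnd (φ i) ∧ LocFinEnd (ψ i))
    (hcomm : ∀ i j, Commute (φ i) (φ j) ∧ Commute (φ i) (ψ j) ∧ Commute (ψ i) (ψ j))
    (hsymm : (∑ i, TensorProduct.map (φ i) (ψ i) : Module.End ℂ (V ⊗[ℂ] V)) =
      ∑ i, TensorProduct.map (ψ i) (φ i))
    (hJCφ : ∀ i, IsJCDecomp (φ i) (φs i) (φn i))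
    (hJCψ : ∀ i, IsJCDecomp (ψ i) (ψs i) (ψn i))
    (a b : V) :
    ∃ (r : ℕ) (x y : Fin r → V) (d : Fin r → ℂ) (m : ℕ),
      (∑ i, x i ⊗ₜ[ℂ] y i) = a ⊗ₜ[ℂ] b ∧
      (∀ i j, ∃ c : ℂ, φs j (x i) = c • x i) ∧
      (∀ i j, ∃ c : ℂ, ψs j (y i) = c • y i) ∧
      (∀ i, (∑ j, TensorProduct.map (φs j) (ψs j)) (x i ⊗ₜ[ℂ] y i) = d i • (x i ⊗ₜ[ℂ] y i)) ∧
      (∀ i, ((∑ j, (TensorProduct.map (φs j) (ψn j) + TensorProduct.map (φn j) (ψs j) +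
        TensorProduct.map (φn j) (ψn j))) ^ m) (x i ⊗ₜ[ℂ] y i) = 0) := by
  classical
  have hφdiag : ∀ j, DiagEnd (φs j) := fun j => (hJCφ j).2.2.1
  have hφnil : ∀ j, LocNilpEnd (φn j) := fun j => (hJCφ j).2.2.2
  have hψdiag : ∀ j, DiagEnd (ψs j) := fun j => (hJCψ j).2.2.1
  have hψnil : ∀ j, LocNilpEnd (ψn j) := fun j => (hJCψ j).2.2.2
  have W1φ : ∀ i j, Commute (φ i) (φs j) ∧ Commute (φ i) (φn j) :=
    fun i j => BraidAux.commute_sn_of_commute (hJCφ j) (hcomm i j).1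
  have W1ψ : ∀ i j, Commute (ψ i) (ψs j) ∧ Commute (ψ i) (ψn j) :=
    fun i j => BraidAux.commute_sn_of_commute (hJCψ j) (hcomm i j).2.2
  have hφweb : ∀ i j, Commute (φs i) (φs j) ∧ Commute (φs i) (φn j) ∧
      Commute (φn i) (φn j) := by
    intro i j
    have h1 := BraidAux.commute_sn_of_commute (hJCφ j) ((W1φ j i).1.symm)
    have h2 := BraidAux.commute_sn_of_commute (hJCφ j) ((W1φ j i).2.symm)
    exact ⟨h1.1, h1.2, h2.2⟩
  have hψweb : ∀ i j, Commute (ψs i) (ψs j) ∧ Commute (ψs i) (ψn j) ∧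
      Commute (ψn i) (ψn j) := by
    intro i j
    have h1 := BraidAux.commute_sn_of_commute (hJCψ j) ((W1ψ j i).1.symm)
    have h2 := BraidAux.commute_sn_of_commute (hJCψ j) ((W1ψ j i).2.symm)
    exact ⟨h1.1, h1.2, h2.2⟩
  -- simultaneous eigen decompositions of a and b
  have ha : a ∈ Submodule.span ℂ {x : V | ∀ j, ∃ c : ℂ, φs j x = c • x} := by
    rw [BraidAux.simul_diag_span φs hφdiag (fun i j => (hφweb i j).1)]; trivial
  have hb : b ∈ Submodule.span ℂ {x : V | ∀ j, ∃ c : ℂ, ψs j x = c • x} := by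
    rw [BraidAux.simul_diag_span ψs hψdiag (fun i j => (hψweb i j).1)]; trivial
  obtain ⟨n1, f1, g1, hsum1⟩ := Submodule.mem_span_set'.1 ha
  obtain ⟨n2, f2, g2, hsum2⟩ := Submodule.mem_span_set'.1 hb
  set X : Fin n1 → V := fun i => f1 i • (g1 i : V) with hX
  set Y : Fin n2 → V := fun i => f2 i • (g2 i : V) with hY
  have hXeig : ∀ i j, ∃ c : ℂ, φs j (X i) = c • X i := by
    intro i j
    obtain ⟨c, hc⟩ := (g1 i).2 j
    refine ⟨c, ?_⟩
    show φs j (f1 i • (g1 i : V)) = c • (f1 i • (g1 i : V))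
    rw [map_smul, hc, smul_comm]
  have hYeig : ∀ i j, ∃ c : ℂ, ψs j (Y i) = c • Y i := by
    intro i j
    obtain ⟨c, hc⟩ := (g2 i).2 j
    refine ⟨c, ?_⟩
    show ψs j (f2 i • (g2 i : V)) = c • (f2 i • (g2 i : V))
    rw [map_smul, hc, smul_comm]
  choose cX hcX using hXeig
  choose cY hcY using hYeig
  have key : ∀ u w : V, ∃ m : ℕ,
      ((∑ j, (TensorProduct.map (φs j) (ψn j) + TensorProduct.map (φn j) (ψs j) +
        TensorProduct.map (φn j) (ψn j))) ^ m) (u ⊗ₜ[ℂ] w) = 0 :=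
    fun u w => BraidAux.exists_pow_tensor_zero φs φn ψs ψn hφdiag hφnil hφweb
      hψdiag hψnil hψweb u w
  choose M hM using key
  set e : Fin (n1 * n2) ≃ Fin n1 × Fin n2 := finProdFinEquiv.symm with he
  refine ⟨n1 * n2, fun i => X (e i).1, fun i => Y (e i).2,
    fun i => ∑ j, cX (e i).1 j * cY (e i).2 j,
    Finset.univ.sup (fun i : Fin (n1 * n2) => M (X (e i).1) (Y (e i).2)),
    ?_, ?_, ?_, ?_, ?_⟩
  · -- sum equals a ⊗ b
    have h1 : ∑ i, X i = a := hsum1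
    have h2 : ∑ i, Y i = b := hsum2
    calc ∑ i : Fin (n1 * n2), X (e i).1 ⊗ₜ[ℂ] Y (e i).2
        = ∑ p : Fin n1 × Fin n2, X p.1 ⊗ₜ[ℂ] Y p.2 :=
          Equiv.sum_comp e (fun p => X p.1 ⊗ₜ[ℂ] Y p.2)
      _ = ∑ i1 : Fin n1, ∑ i2 : Fin n2, X i1 ⊗ₜ[ℂ] Y i2 := by rw [Fintype.sum_prod_type]
      _ = ∑ i1 : Fin n1, X i1 ⊗ₜ[ℂ] (∑ i2 : Fin n2, Y i2) := by
          exact Finset.sum_congr rfl fun i1 _ => (TensorProduct.tmul_sum _ _ _).symm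
      _ = (∑ i1 : Fin n1, X i1) ⊗ₜ[ℂ] (∑ i2 : Fin n2, Y i2) :=
          (TensorProduct.sum_tmul _ _ _).symm
      _ = a ⊗ₜ[ℂ] b := by rw [h1, h2]
  · exact fun i j => ⟨cX (e i).1 j, hcX (e i).1 j⟩
  · exact fun i j => ⟨cY (e i).2 j, hcY (e i).2 j⟩
  · intro i
    rw [LinearMap.sum_apply]
    have hterm : ∀ j : Fin L, (TensorProduct.map (φs j) (ψs j)) (X (e i).1 ⊗ₜ[ℂ] Y (e i).2)
        = (cX (e i).1 j * cY (e i).2 j) • (X (e i).1 ⊗ₜ[ℂ] Y (e i).2) := by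
      intro j
      rw [TensorProduct.map_tmul, hcX, hcY, TensorProduct.tmul_smul,
        ← TensorProduct.smul_tmul', smul_smul, mul_comm]
    rw [Finset.sum_congr rfl (fun j _ => hterm j), ← Finset.sum_smul]
  · intro i
    exact BraidAux.pow_zero_mono (hM (X (e i).1) (Y (e i).2))
      (Finset.le_sup (f := fun i => M (X (e i).1) (Y (e i).2)) (Finset.mem_univ i))
end

section
/- If V is a braided logarithmic vertex algebra whose braiding map 𝒮 is semisimple (𝒮 = 𝒮^(s)) and diagonalizable on a basis {a_i} with 𝒮(a_i ⊗ a_j) = s_{ij} a_i ⊗ a_j, then the sets I_i := {j : s_{jl} − s_{il} ∈ ℤ for all l} partition the index set I, and Q := {I_i} forms an abelian group under r·I_i + t·I_j := {k : s_{kl} − r s_{il} − t s_{jl} ∈ ℤ for all l}, with a well-defined symmetric biadditive map Δ: Q × Q → ℂ/ℤ given by Δ(I_i, I_j) := s_{ij} mod ℤ. -/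
/-- The class `I_i := { k | s_{kl} − s_{il} ∈ ℤ for all l }`. -/
def classOf {ι : Type*} (s : ι → ι → ℂ) (i : ι) : Set ι :=
  {k | ∀ l, ∃ z : ℤ, s k l - s i l = (z : ℂ)}

/-- The combination `r·I_i + t·I_j := { k | s_{kl} − r s_{il} − t s_{jl} ∈ ℤ for all l }`. -/
def opClass {ι : Type*} (s : ι → ι → ℂ) (r t : ℤ) (i j : ι) : Set ι :=
  {k | ∀ l, ∃ z : ℤ, s k l - (r : ℂ) * s i l - (t : ℂ) * s j l = (z : ℂ)}

lemma mem_classOf_self {ι : Type*} (s : ι → ι → ℂ) (i : ι) : i ∈ classOf s i :=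
  fun _ => ⟨0, by simp⟩

lemma classOf_eq_of_mem {ι : Type*} {s : ι → ι → ℂ} {i j : ι} (h : j ∈ classOf s i) :
    classOf s i = classOf s j := by
  ext k
  constructor <;> intro hk l
  · obtain ⟨z, hz⟩ := hk l
    obtain ⟨w, hw⟩ := h l
    exact ⟨z - w, by push_cast; linear_combination hz - hw⟩
  · obtain ⟨z, hz⟩ := hk l
    obtain ⟨w, hw⟩ := h l
    exact ⟨z + w, by push_cast; linear_combination hz + hw⟩

lemma mem_of_classOf_eq {ι : Type*} {s : ι → ι → ℂ} {i j : ι} (h : classOf s i = classOf s j) :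
    j ∈ classOf s i := h ▸ mem_classOf_self s j

lemma mem_opClass_of_eq {ι : Type*} {s : ι → ι → ℂ} {r t : ℤ} {i j m : ι}
    (h : opClass s r t i j = classOf s m) : m ∈ opClass s r t i j :=
  h ▸ mem_classOf_self s m

/-- For a symmetric matrix `(s_{ij})` of complex numbers (the eigenvalues of a semisimple
braiding map on a basis), the sets `I_i = {j : s_{jl} − s_{il} ∈ ℤ ∀ l}` partition the index
set, `Q = {I_i}` carries the structure of an abelian group under
`r·I_i + t·I_j = {k : s_{kl} − r s_{il} − t s_{jl} ∈ ℤ ∀ l}` (the operation is well defined on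
classes, commutative, associative, with `I_i + 0·I_j = I_i` as identity and with inverses), and
`Δ(I_i, I_j) := s_{ij} mod ℤ` is a well-defined symmetric biadditive map `Q × Q → ℂ/ℤ`. -/
theorem generalized_VA_grading_group {ι : Type*} (s : ι → ι → ℂ)
    (hsym : ∀ i j, s i j = s j i) :
    -- j ∈ I_i iff I_i = I_j, hence the classes partition the index set
    (∀ i j, j ∈ classOf s i ↔ classOf s i = classOf s j) ∧
    (∀ i, i ∈ classOf s i) ∧
    (∀ i j, classOf s i = classOf s j ∨ Disjoint (classOf s i) (classOf s j)) ∧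
    -- the operation is well defined on classes
    (∀ (r t : ℤ) (i i' j j'), classOf s i = classOf s i' → classOf s j = classOf s j' →
      opClass s r t i j = opClass s r t i' j') ∧
    -- commutativity
    (∀ (r t : ℤ) (i j), opClass s r t i j = opClass s t r j i) ∧
    -- `1·I_i + 0·I_j = I_i`
    (∀ i j, opClass s 1 0 i j = classOf s i) ∧
    -- associativity (via representatives)
    (∀ i j k m m', opClass s 1 1 i j = classOf s m → opClass s 1 1 j k = classOf s m' →
      opClass s 1 1 m k = opClass s 1 1 i m') ∧
    -- inverses (via representatives)
    (∀ i m, opClass s (-1) 0 i i = classOf s m →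
      opClass s 1 1 i m = opClass s 0 0 i i) ∧
    -- Δ is well defined on classes, with values in ℂ/ℤ
    (∀ i i' j j', classOf s i = classOf s i' → classOf s j = classOf s j' →
      ∃ z : ℤ, s i j - s i' j' = (z : ℂ)) ∧
    -- Δ is symmetric
    (∀ i j, s i j = s j i) ∧
    -- Δ is biadditive with respect to the group structure
    (∀ i j m l, opClass s 1 1 i j = classOf s m →
      ∃ z : ℤ, s m l - s i l - s j l = (z : ℂ)) := by
  refine ⟨fun i j => ⟨classOf_eq_of_mem, mem_of_classOf_eq⟩, mem_classOf_self s,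
    ?_, ?_, ?_, ?_, ?_, ?_, ?_, hsym, ?_⟩
  · intro i j
    by_cases h : Disjoint (classOf s i) (classOf s j)
    · exact Or.inr h
    · left
      obtain ⟨k, hki, hkj⟩ := Set.not_disjoint_iff.mp h
      exact (classOf_eq_of_mem hki).trans (classOf_eq_of_mem hkj).symm
  · intro r t i i' j j' hi hj
    have hi' := mem_of_classOf_eq hi
    have hj' := mem_of_classOf_eq hj
    ext k
    constructor <;> intro hk l <;>
      obtain ⟨z, hz⟩ := hk l <;> obtain ⟨w, hw⟩ := hi' l <;> obtain ⟨v, hv⟩ := hj' l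
    · exact ⟨z - r * w - t * v, by push_cast; linear_combination hz - (r : ℂ) * hw - (t : ℂ) * hv⟩
    · exact ⟨z + r * w + t * v, by push_cast; linear_combination hz + (r : ℂ) * hw + (t : ℂ) * hv⟩
  · intro r t i j
    ext k
    constructor <;> intro hk l <;> obtain ⟨z, hz⟩ := hk l <;>
      exact ⟨z, by linear_combination hz⟩
  · intro i j
    ext k
    constructor <;> intro hk l <;> obtain ⟨z, hz⟩ := hk l <;>
      exact ⟨z, by push_cast at hz ⊢; linear_combination hz⟩
  · intro i j k m m' hm hm'
    have h1 := mem_opClass_of_eq hm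
    have h2 := mem_opClass_of_eq hm'
    ext k0
    constructor <;> intro hk l <;>
      obtain ⟨z, hz⟩ := hk l <;> obtain ⟨w, hw⟩ := h1 l <;> obtain ⟨v, hv⟩ := h2 l
    · exact ⟨z + w - v, by push_cast at hz hw hv ⊢; linear_combination hz + hw - hv⟩
    · exact ⟨z - w + v, by push_cast at hz hw hv ⊢; linear_combination hz - hw + hv⟩
  · intro i m hm
    have h1 := mem_opClass_of_eq hm
    ext k
    constructor <;> intro hk l <;> obtain ⟨z, hz⟩ := hk l <;> obtain ⟨w, hw⟩ := h1 l
    · exact ⟨z + w, by push_cast at hz hw ⊢; linear_combination hz + hw⟩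
    · exact ⟨z - w, by push_cast at hz hw ⊢; linear_combination hz - hw⟩
  · intro i i' j j' hi hj
    have hi' := mem_of_classOf_eq hi
    have hj' := mem_of_classOf_eq hj
    obtain ⟨w, hw⟩ := hi' j
    obtain ⟨v, hv⟩ := hj' i'
    exact ⟨-w - v, by push_cast; linear_combination -hw - hv + hsym i' j - hsym i' j'⟩
  · intro i j m l hm
    obtain ⟨z, hz⟩ := mem_opClass_of_eq hm l
    exact ⟨z, by push_cast at hz; linear_combination hz⟩
end

section
/- Any translation covariant field a(z) satisfies a(z)|0⟩ ∈ V[[z]]: applying a(z) to the vacuum yields a series with only nonnegative integer powers of z and no ζ-dependence. -/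
/-- Downward induction in `k`: if `c k = 0` for large `k` and
`γ • c k + (k+1) • c (k+1) = 0` for `k ≥ k0` with `γ ≠ 0`, then `c k = 0` for `k ≥ k0`. -/
lemma down_aux {V : Type*} [AddCommGroup V] [Module ℂ V]
    (c : ℕ → V) (γ : ℂ) (hγ : γ ≠ 0) (k0 K : ℕ)
    (hK : ∀ k ≥ K, c k = 0)
    (hrec : ∀ k ≥ k0, γ • c k + ((k : ℂ) + 1) • c (k + 1) = 0) :
    ∀ k ≥ k0, c k = 0 := by
  have main : ∀ d k, k ≥ k0 → K ≤ k + d → c k = 0 := by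
    intro d
    induction d with
    | zero => intro k hk0 hK'; exact hK k (by omega)
    | succ d ih =>
      intro k hk0 hK'
      by_cases h : K ≤ k
      · exact hK k h
      · have h1 : c (k + 1) = 0 := ih (k + 1) (by omega) (by omega)
        have h2 := hrec k hk0
        rw [h1, smul_zero, add_zero] at h2
        exact (smul_eq_zero.mp h2).resolve_left hγ
  intro k hk
  exact main K k hk (by omega)

/-- A translation covariant logarithmic field applied to the vacuum has only nonnegative
integer powers of `z` and no `ζ`-dependence: `a(z)|0⟩ ∈ V[[z]]`.

A logarithmic field is encoded by its coefficients: `a v α k` is the coefficient of `z^α ζ^k`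
in `a(z)v` (with `ζ = log z`).  The support conditions say that the exponents lie in finitely
many cosets `−δ + ℤ_{≥0}` and that the `ζ`-dependence is polynomial.  Translation covariance
`[T, a(z)] = D_z a(z)`, `D_z = ∂_z + z⁻¹∂_ζ`, is stated coefficient-wise. -/
theorem translation_covariant_field_on_vacuum {V : Type*} [AddCommGroup V] [Module ℂ V]
    (vac : V) (T : Module.End ℂ V)
    (hTvac : T vac = 0)
    (a : V →ₗ[ℂ] (ℂ → ℕ → V))
    -- the exponents of the field lie in finitely many cosets `−δ + ℤ_{≥0}`
    (hsupp : ∃ D : Finset ℂ, ∀ (v : V) (α : ℂ) (k : ℕ),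
      a v α k ≠ 0 → ∃ δ ∈ D, ∃ m : ℕ, α = -δ + (m : ℂ))
    -- each coefficient of a power of `z` is polynomial in `ζ`
    (hzeta : ∀ (v : V) (α : ℂ), ∃ K : ℕ, ∀ k ≥ K, a v α k = 0)
    -- translation covariance `[T, a(z)] = D_z a(z)`
    (hcov : ∀ (v : V) (α : ℂ) (k : ℕ),
      T (a v α k) - a (T v) α k =
        (α + 1) • a v (α + 1) k + ((k : ℂ) + 1) • a v (α + 1) (k + 1)) :
    ∀ (α : ℂ) (k : ℕ), a vac α k ≠ 0 → (∃ m : ℕ, α = (m : ℂ)) ∧ k = 0 := by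
  -- vacuum version of the covariance relation
  have haT : a (T vac) = 0 := by rw [hTvac, map_zero]
  have hrel : ∀ (β : ℂ) (k : ℕ),
      T (a vac β k) = (β + 1) • a vac (β + 1) k + ((k : ℂ) + 1) • a vac (β + 1) (k + 1) := by
    intro β k
    have := hcov vac β k
    rw [haT] at this
    simpa using this
  obtain ⟨D, hD⟩ := hsupp
  intro α k hk
  -- choose N large enough that exponents α - n, n ≥ N, are outside all cosets
  set M : ℝ := (D.image Complex.re).sup' (by
    rcases D.eq_empty_or_nonempty with h | h
    · exfalso
      obtain ⟨δ, hδ, _⟩ := hD vac α k hk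
      simp [h] at hδ
    · exact h.image _) id with hM
  have hMle : ∀ δ ∈ D, δ.re ≤ M := fun δ hδ =>
    Finset.le_sup' id (Finset.mem_image_of_mem Complex.re hδ)
  set N : ℕ := ⌈α.re + M⌉₊ + 1 with hN
  have hNlt : α.re + M < (N : ℝ) := by
    have := Nat.le_ceil (α.re + M)
    push_cast [hN]
    linarith
  -- base: everything vanishes at exponent α - N
  have hbase : ∀ j, a vac (α - (N : ℂ)) j = 0 := by
    intro j
    by_contra h
    obtain ⟨δ, hδ, m, hm⟩ := hD vac (α - (N : ℂ)) j h
    have hre : α.re - (N : ℝ) = -δ.re + (m : ℝ) := by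
      have := congrArg Complex.re hm
      simpa using this
    have h1 : (0 : ℝ) ≤ (m : ℝ) := Nat.cast_nonneg m
    have h2 := hMle δ hδ
    linarith
  -- statement to be propagated upward
  set S : ℂ → Prop := fun β => ∀ j : ℕ, ¬((∃ m : ℕ, β = (m : ℂ)) ∧ j = 0) → a vac β j = 0
    with hS
  have key : ∀ n : ℕ, S (α - (N : ℂ) + n) := by
    intro n
    induction n with
    | zero => intro j _; simpa using hbase j
    | succ n ih =>
      set β : ℂ := α - (N : ℂ) + n with hβ
      have hβ1 : α - (N : ℂ) + (n + 1 : ℕ) = β + 1 := by push_cast [hβ]; ring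
      rw [hβ1]
      by_cases hint : ∃ m : ℕ, β + 1 = (m : ℂ)
      · obtain ⟨m, hm⟩ := hint
        rcases Nat.eq_zero_or_pos m with hm0 | hm0
        · -- β + 1 = 0 : then β = -1 not a nonneg integer, so a vac β j = 0 for all j
          have hβ0 : β + 1 = 0 := by rw [hm, hm0]; simp
          have hβall : ∀ j, a vac β j = 0 := by
            intro j
            apply ih j
            rintro ⟨⟨m', hm'⟩, -⟩
            have : (m' : ℂ) + 1 = 0 := by rw [← hm', hβ0]
            have hre := congrArg Complex.re this
            simp at hre
            have : (0 : ℝ) ≤ (m' : ℝ) := Nat.cast_nonneg m'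
            linarith
          intro j hj
          have hj0 : j ≠ 0 := by
            intro h
            exact hj ⟨⟨m, hm⟩, h⟩
          obtain ⟨i, rfl⟩ := Nat.exists_eq_succ_of_ne_zero hj0
          have := hrel β i
          rw [hβall i, map_zero, hβ0, zero_smul, zero_add] at this
          have hnz : ((i : ℂ) + 1) ≠ 0 := Nat.cast_add_one_ne_zero i
          rw [show β + 1 = 0 from hβ0]
          exact (smul_eq_zero.mp this.symm).resolve_left hnz
        · -- β + 1 = m ≥ 1 : β is a nonneg integer, propagate vanishing for j ≥ 1
          have hβnat : β = ((m - 1 : ℕ) : ℂ) := by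
            have : β = (m : ℂ) - 1 := by linear_combination hm
            rw [this]
            push_cast [Nat.cast_sub hm0]
            ring
          have hβpos : ∀ j ≥ 1, a vac β j = 0 := by
            intro j hj
            exact ih j (by rintro ⟨-, rfl⟩; omega)
          have hnz : β + 1 ≠ 0 := by
            rw [hm]
            exact_mod_cast Nat.cast_ne_zero.mpr (by omega)
          obtain ⟨K, hK⟩ := hzeta vac (β + 1)
          have hall := down_aux (fun j => a vac (β + 1) j) (β + 1) hnz 1 K hK
            (fun j hj => by
              have := hrel β j
              rw [hβpos j hj, map_zero] at this
              exact this.symm)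
          intro j hj
          have hj0 : j ≠ 0 := by
            intro h
            exact hj ⟨⟨m, hm⟩, h⟩
          exact hall j (by omega)
      · -- β + 1 not a nonneg integer: then β isn't either, everything vanishes
        have hβall : ∀ j, a vac β j = 0 := by
          intro j
          apply ih j
          rintro ⟨⟨m', hm'⟩, -⟩
          exact hint ⟨m' + 1, by push_cast [hm']; ring⟩
        have hnz : β + 1 ≠ 0 := fun h => hint ⟨0, by simp [h]⟩
        obtain ⟨K, hK⟩ := hzeta vac (β + 1)
        have hall := down_aux (fun j => a vac (β + 1) j) (β + 1) hnz 0 K hK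
          (fun j _ => by
            have := hrel β j
            rw [hβall j, map_zero] at this
            exact this.symm)
        intro j _
        exact hall j (Nat.zero_le j)
  have := key N
  have hαeq : α - (N : ℂ) + (N : ℂ) = α := by ring
  rw [hαeq] at this
  by_contra h
  exact hk (this k (by tauto))
end

section
/- In the braided logarithmic vertex algebra with 𝒮 = Φ ⊗ Φ where Φ(w) = iw, Φ(w̄) = −iw̄, and with μ_(n)(a⊗b) = 0 for a,b ∈ {w, w̄} and n ≥ 0, the Borcherds identity with n = 0 specialized to w ⊗ w ⊗ v yields the quadratic relation Σ_{j≥0}(w_{m−j}w_{k+j} + w_{k−j}w_{m+j}) v = 0 for all m, k ∈ ℤ and v ∈ V, where w_n denotes the operator μ_(n)(w ⊗ −). -/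
open scoped TensorProduct BigOperators

noncomputable section

/-- The operator-valued binomial coefficient `binom (n + S) j = (n+S)(n-1+S)⋯(n-j+1+S)/j!`. -/
def opBinom {M : Type*} [AddCommGroup M] [Module ℂ M] (S : Module.End ℂ M) (n : ℤ) (j : ℕ) :
    Module.End ℂ M :=
  (j.factorial : ℂ)⁻¹ •
    (((List.range j).map fun l => (((n : ℂ) - (l : ℂ)) • (1 : Module.End ℂ M) + S)).prod)


/-- Auxiliary: `opBinom` with the coerced list rewritten as a plain `List.map` over `range`. -/
lemma opBinom_eq {M : Type*} [AddCommGroup M] [Module ℂ M] (S : Module.End ℂ M) (n : ℤ) (j : ℕ) :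
    opBinom S n j = (j.factorial : ℂ)⁻¹ •
      (((List.range j).map fun l : ℕ =>
        (((n : ℂ)) - (l : ℂ)) • (1 : Module.End ℂ M) + S).prod) := by
  unfold opBinom
  simp only [List.bind_eq_flatMap, List.pure_def, ← List.map_eq_flatMap, List.map_map]
  rfl

/-- In a braided logarithmic vertex algebra with braiding `𝒮 = Φ ⊗ Φ`, `Φ(w) = i w`, and
`μₙ(w ⊗ w) = 0` for `n ≥ 0`, the Borcherds identity with `n = 0` specialized to `w ⊗ w ⊗ v`
yields the quadratic relation `Σ_{j≥0} (w_{m−j} w_{k+j} + w_{k−j} w_{m+j}) v = 0`,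
where `w_n = μₙ(w ⊗ −)`. -/
theorem nls_quadratic_relation {V : Type*} [AddCommGroup V] [Module ℂ V]
    (μ : ℤ → V →ₗ[ℂ] V →ₗ[ℂ] V) (Φ : Module.End ℂ V) (w : V)
    (E : Module.End ℂ (V ⊗[ℂ] V))
    (hw : Φ w = Complex.I • w)
    (hμw : ∀ n : ℤ, 0 ≤ n → μ n w w = 0)
    (hE : ∀ (t : V ⊗[ℂ] V) (d : ℂ), (TensorProduct.map Φ Φ) t = d • t →
      E t = Complex.exp (Real.pi * Complex.I * d) • t)
    (borcherds : ∀ (m n k : ℤ) (a b c : V),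
      (∑ᶠ j : ℕ, ((-1 : ℂ) ^ j) •
          TensorProduct.lift ((μ (m + n - j)).compl₂ ((μ (k + j)).flip c))
            (opBinom (TensorProduct.map Φ Φ) n j (a ⊗ₜ[ℂ] b)))
        - (∑ᶠ j : ℕ, ((-1 : ℂ) ^ (n + (j : ℤ))) •
          TensorProduct.lift ((μ (n + k - j)).compl₂ ((μ (m + j)).flip c))
            (E (opBinom (TensorProduct.map Φ Φ) n j (b ⊗ₜ[ℂ] a))))
        = ∑ᶠ j : ℕ, TensorProduct.lift ((μ (m + k - j)).comp ((μ (n + j)).flip b))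
            (opBinom (TensorProduct.map Φ Φ) m j (a ⊗ₜ[ℂ] c))) :
    ∀ (m k : ℤ) (v : V),
      (∑ᶠ j : ℕ, μ (m - j) w (μ (k + j) w v)) +
        (∑ᶠ j : ℕ, μ (k - j) w (μ (m + j) w v)) = 0 := by
  intro m k v
  set S : Module.End ℂ (V ⊗[ℂ] V) := TensorProduct.map Φ Φ with hS
  -- S (w ⊗ w) = -(w ⊗ w)
  have hSww : S (w ⊗ₜ[ℂ] w) = (-1 : ℂ) • (w ⊗ₜ[ℂ] w) := by
    simp only [hS, TensorProduct.map_tmul, hw, TensorProduct.smul_tmul',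
      TensorProduct.tmul_smul, smul_smul, Complex.I_mul_I]
  -- eigenvalue computation of the product
  have hprod : ∀ j : ℕ,
      (((List.range j).map fun l : ℕ =>
        (((0 : ℤ) : ℂ) - (l : ℂ)) • (1 : Module.End ℂ (V ⊗[ℂ] V)) + S).prod (w ⊗ₜ[ℂ] w))
        = (((-1 : ℂ) ^ j * j.factorial) • (w ⊗ₜ[ℂ] w)) := by
    intro j
    induction j with
    | zero => simp
    | succ j ih =>
      rw [List.range_succ, List.map_append, List.prod_append]
      simp only [List.map_cons, List.map_nil, List.prod_cons, List.prod_nil, mul_one]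
      have hstep : ((((0 : ℤ) : ℂ) - (j : ℂ)) • (1 : Module.End ℂ (V ⊗[ℂ] V)) + S)
          (w ⊗ₜ[ℂ] w) = (-((j : ℂ) + 1)) • (w ⊗ₜ[ℂ] w) := by
        rw [LinearMap.add_apply, LinearMap.smul_apply, Module.End.one_apply, hSww,
          ← add_smul]
        ring_nf
      rw [Module.End.mul_apply, hstep, map_smul, ih, smul_smul,
        Nat.factorial_succ]
      congr 1
      push_cast
      ring
  have eig : ∀ j : ℕ, opBinom S 0 j (w ⊗ₜ[ℂ] w) = ((-1 : ℂ) ^ j) • (w ⊗ₜ[ℂ] w) := by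
    intro j
    rw [opBinom_eq, LinearMap.smul_apply, hprod, smul_smul]
    congr 1
    have : (j.factorial : ℂ) ≠ 0 := Nat.cast_ne_zero.mpr j.factorial_ne_zero
    field_simp
  -- E (w ⊗ w) = -(w ⊗ w)
  have hEww : E (w ⊗ₜ[ℂ] w) = -(w ⊗ₜ[ℂ] w) := by
    have := hE (w ⊗ₜ[ℂ] w) (-1) hSww
    rw [this]
    have : Complex.exp ((Real.pi : ℂ) * Complex.I * (-1)) = -1 := by
      rw [mul_neg_one, Complex.exp_neg, Complex.exp_pi_mul_I]
      norm_num
    rw [this]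
    rw [neg_smul, one_smul]
  -- RHS terms vanish
  have rhs0 : ∀ j : ℕ,
      TensorProduct.lift ((μ (m + k - j)).comp ((μ ((0 : ℤ) + j)).flip w))
        (opBinom S m j (w ⊗ₜ[ℂ] v)) = 0 := by
    intro j
    have hfac : ∀ g ∈ (List.range j).map fun l : ℕ =>
        (((m : ℤ) : ℂ) - (l : ℂ)) • (1 : Module.End ℂ (V ⊗[ℂ] V)) + S,
        ∀ u : V, ∃ u' : V, g (w ⊗ₜ[ℂ] u) = w ⊗ₜ[ℂ] u' := by
      intro g hg u
      obtain ⟨l, _, rfl⟩ := List.mem_map.mp hg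
      refine ⟨(((m : ℤ) : ℂ) - (l : ℂ)) • u + Complex.I • Φ u, ?_⟩
      rw [LinearMap.add_apply, LinearMap.smul_apply, Module.End.one_apply]
      simp only [hS, TensorProduct.map_tmul, hw, TensorProduct.smul_tmul',
        TensorProduct.tmul_smul, TensorProduct.tmul_add]
    have key : ∀ (L : List (Module.End ℂ (V ⊗[ℂ] V))),
        (∀ g ∈ L, ∀ u : V, ∃ u' : V, g (w ⊗ₜ[ℂ] u) = w ⊗ₜ[ℂ] u') →
        ∀ u : V, ∃ u' : V, L.prod (w ⊗ₜ[ℂ] u) = w ⊗ₜ[ℂ] u' := by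
      intro L
      induction L with
      | nil => intro _ u; exact ⟨u, by simp⟩
      | cons g L ih =>
        intro h u
        obtain ⟨u', hu'⟩ := ih (fun g hg => h g (List.mem_cons_of_mem _ hg)) u
        obtain ⟨u'', hu''⟩ := h g List.mem_cons_self u'
        exact ⟨u'', by rw [List.prod_cons, Module.End.mul_apply, hu', hu'']⟩
    obtain ⟨u', hu'⟩ := key _ hfac v
    rw [opBinom_eq, LinearMap.smul_apply, hu', map_smul, TensorProduct.lift.tmul]
    simp only [LinearMap.comp_apply, LinearMap.flip_apply]
    rw [hμw ((0 : ℤ) + j) (by positivity)]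
    simp
  -- now assemble
  have hb := borcherds m 0 k w w v
  have hA : (∑ᶠ j : ℕ, ((-1 : ℂ) ^ j) •
      TensorProduct.lift ((μ (m + 0 - j)).compl₂ ((μ (k + j)).flip v))
        (opBinom S 0 j (w ⊗ₜ[ℂ] w)))
      = ∑ᶠ j : ℕ, μ (m - j) w (μ (k + j) w v) := by
    refine finsum_congr fun j => ?_
    rw [eig j, map_smul, smul_smul, ← mul_pow]
    simp [TensorProduct.lift.tmul]
  have hB : (∑ᶠ j : ℕ, ((-1 : ℂ) ^ ((0 : ℤ) + (j : ℤ))) •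
      TensorProduct.lift ((μ (0 + k - j)).compl₂ ((μ (m + j)).flip v))
        (E (opBinom S 0 j (w ⊗ₜ[ℂ] w))))
      = -∑ᶠ j : ℕ, μ (k - j) w (μ (m + j) w v) := by
    rw [← finsum_neg_distrib]
    refine finsum_congr fun j => ?_
    rw [eig j, map_smul, hEww, zero_add, zpow_natCast, smul_neg, map_neg, map_smul,
      smul_neg, smul_smul, ← mul_pow]
    simp [TensorProduct.lift.tmul]
  have hR : (∑ᶠ j : ℕ, TensorProduct.lift ((μ (m + k - j)).comp ((μ ((0 : ℤ) + j)).flip w))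
      (opBinom S m j (w ⊗ₜ[ℂ] v))) = 0 := by
    rw [finsum_congr rhs0, finsum_zero]
  rw [hA, hB, hR, sub_neg_eq_add] at hb
  exact hb

end
end
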